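/- arXiv:2111.11695 — 6 statements merged into one kernel-verified Lean document; each statement's English description precedes it below -/
import Mathlib

section
/- If a mirror-symmetric field-free XX chain of even length N has single-excitation eigenvalues ±1, ±2², ±3², ..., ±(N/2)² and maximum coupling strength rescaled to 1, then its perfect state transfer time t₀ = π/2 · J_max satisfies t₀ ≥ (π/16)·N(N+2). -/
open Polynomial Finset

noncomputable def cP (J : ℕ → ℝ) : ℕ → ℝ[X]
  | 0 => 1
  | 1 => X
  | (j+2) => X * cP J (j+1) - C ((J (j+1))^2) * cP J j

lemma cP_rec (J : ℕ → ℝ) {m : ℕ} (hm : 1 ≤ m) :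
    cP J (m+1) = X * cP J m - C ((J m)^2) * cP J (m-1) := by
  cases m with
  | zero => omega
  | succ i => rfl

lemma cP_monic (J : ℕ → ℝ) : ∀ j, (cP J j).Monic ∧ (cP J j).natDegree = j := by
  intro j
  induction j using Nat.twoStepInduction with
  | zero => exact ⟨monic_one, natDegree_one⟩
  | one => exact ⟨monic_X, natDegree_X⟩
  | more j ih ih1 =>
    have h1 : (X * cP J (j+1)).Monic := monic_X.mul ih1.1
    have hd1 : (X * cP J (j+1)).natDegree = j + 2 := by
      rw [monic_X.natDegree_mul ih1.1, natDegree_X, ih1.2]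
      omega
    have hdeg : (X * cP J (j+1)).degree = ((j+2 : ℕ) : WithBot ℕ) := by
      rw [degree_eq_natDegree h1.ne_zero, hd1]
    have hdlt : (-(C ((J (j+1))^2) * cP J j)).degree < (X * cP J (j+1)).degree := by
      rw [degree_neg, hdeg]
      have hcj : (cP J j).degree ≤ ((j:ℕ) : WithBot ℕ) := by
        have := degree_le_natDegree (p := cP J j); rwa [ih.2] at this
      calc (C ((J (j+1))^2) * cP J j).degree
          ≤ (C ((J (j+1))^2)).degree + (cP J j).degree := degree_mul_le _ _
        _ ≤ 0 + ((j:ℕ) : WithBot ℕ) := add_le_add degree_C_le hcj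
        _ = ((j:ℕ) : WithBot ℕ) := zero_add _
        _ < ((j+2 : ℕ) : WithBot ℕ) := by exact_mod_cast by omega
    have heq : cP J (j+2) = X * cP J (j+1) + -(C ((J (j+1))^2) * cP J j) := by
      show X * cP J (j+1) - C ((J (j+1))^2) * cP J j = _
      ring
    constructor
    · rw [heq]; exact h1.add_of_left hdlt
    · rw [heq]
      exact natDegree_eq_of_degree_eq_some ((degree_add_eq_left_of_degree_lt hdlt).trans hdeg)

lemma cP_subcoeff (J : ℕ → ℝ) : ∀ j, (cP J (j+1)).coeff j = 0 := by
  intro j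
  induction j using Nat.twoStepInduction with
  | zero => show (X : ℝ[X]).coeff 0 = 0; simp
  | one =>
    show (X * X - C ((J 1)^2) * 1 : ℝ[X]).coeff 1 = 0
    have : (X * X - C ((J 1)^2) * 1 : ℝ[X]) = X^2 - C ((J 1)^2) := by ring
    rw [this, coeff_sub, coeff_X_pow, coeff_C]
    norm_num
  | more j ih ih1 =>
    rw [show cP J (j+2+1) = X * cP J (j+2) - C ((J (j+2))^2) * cP J (j+1) from rfl]
    rw [coeff_sub, coeff_X_mul, coeff_C_mul, ih1,
      coeff_eq_zero_of_natDegree_lt (by rw [(cP_monic J (j+1)).2]; omega)]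
    ring

lemma cP_split (J : ℕ → ℝ) (N M : ℕ) (hNM : N = 2 * M) (hM1 : 1 ≤ M)
    (hmirror : ∀ n, 1 ≤ n → n ≤ N - 1 → J n = J (N - n)) :
    cP J N = cP J M * cP J M - C ((J M)^2) * (cP J (M-1) * cP J (M-1)) := by
  have key : ∀ d, M + d ≤ N - 1 →
      cP J (M+d) * cP J (N - (M+d)) -
        C ((J (M+d))^2) * (cP J (M+d-1) * cP J (N - (M+d) - 1)) =
      cP J M * cP J M - C ((J M)^2) * (cP J (M-1) * cP J (M-1)) := by
    intro d
    induction d with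
    | zero =>
      intro _
      have h1 : N - (M + 0) = M := by omega
      rw [h1]
      norm_num
    | succ d ih =>
      intro hd
      have hm1 : 1 ≤ M + d := by omega
      have hle : M + d ≤ N - 1 := by omega
      rw [← ih hle]
      set m := M + d with hm
      have e1 : M + (d+1) = m + 1 := by omega
      have e2 : N - (m+1) = N - m - 1 := by omega
      have e3 : m + 1 - 1 = m := by omega
      have e4 : N - (m+1) - 1 = N - m - 2 := by omega
      rw [e1, e2, e3]
      rw [show N - m - 1 - 1 = N - m - 2 from by omega]
      -- recurrences
      have r1 : cP J (m+1) = X * cP J m - C ((J m)^2) * cP J (m-1) := cP_rec J hm1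
      have hNm : N - m = (N - m - 1) + 1 := by omega
      have hNm1 : 1 ≤ N - m - 1 := by omega
      have r2 : cP J (N - m) = X * cP J (N - m - 1) - C ((J (N - m - 1))^2) * cP J (N - m - 2) := by
        rw [hNm, cP_rec J hNm1]
        congr 2
      have hmir : J (N - m - 1) = J (m + 1) := by
        have := hmirror (m+1) (by omega) (by omega)
        rw [this]
        congr 1
      rw [r1, r2, hmir]
      ring
  have hfin : N - 1 = M + (N - 1 - M) := by omega
  have h := key (N - 1 - M) (by omega)
  rw [← hfin] at h
  have hN1 : 1 ≤ N - 1 := by omega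
  have rN : cP J N = X * cP J (N-1) - C ((J (N-1))^2) * cP J (N-2) := by
    have hNe : N = (N-1) + 1 := by omega
    conv_lhs => rw [hNe]
    rw [cP_rec J hN1]
    rw [show N - 1 - 1 = N - 2 from by omega]
  have g1 : N - (N-1) = 1 := by omega
  have g3 : N - 1 - 1 = N - 2 := by omega
  rw [g1, g3] at h
  rw [rN, ← h]
  show X * cP J (N-1) - C ((J (N-1))^2) * cP J (N-2) =
    cP J (N-1) * X - C ((J (N-1))^2) * (cP J (N-2) * 1)
  ring

lemma cP_wron (J : ℕ → ℝ) : ∀ j, 1 ≤ j → (∀ t, 1 ≤ t → t < j → J t ≠ 0) → ∀ x : ℝ,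
    0 < eval x (derivative (cP J j) * cP J (j-1) - cP J j * derivative (cP J (j-1))) := by
  intro j hj
  induction j, hj using Nat.le_induction with
  | base =>
    intro _ x
    show 0 < eval x (derivative X * 1 - X * derivative 1)
    simp
  | succ j hj ih =>
    intro hJ x
    have ihx := ih (fun t ht htj => hJ t ht (by omega)) x
    have r1 : cP J (j+1) = X * cP J j - C ((J j)^2) * cP J (j-1) := cP_rec J hj
    have hd : derivative (cP J (j+1)) =
        cP J j + X * derivative (cP J j) - C ((J j)^2) * derivative (cP J (j-1)) := by
      rw [r1, derivative_sub, derivative_mul, derivative_mul, derivative_X, derivative_C]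
      ring
    have hJj : (0:ℝ) < (J j)^2 := by
      have := hJ j hj (by omega)
      positivity
    rw [show j + 1 - 1 = j from rfl, hd, r1]
    simp only [eval_sub, eval_add, eval_mul, eval_X, eval_C] at ihx ⊢
    nlinarith [sq_nonneg (eval x (cP J j)), mul_pos hJj ihx]

lemma sum_if_coe {N : ℕ} (c : ℕ) (w : Fin N → ℝ) :
    (∑ j : Fin N, if c = (j:ℕ) then w j else 0) = if h : c < N then w ⟨c, h⟩ else 0 := by
  split_ifs with h
  · rw [Finset.sum_eq_single (⟨c, h⟩ : Fin N)]
    · simp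
    · intro b _ hb
      rw [if_neg]
      intro hc
      exact hb (Fin.ext hc.symm)
    · intro hmem; exact absurd (Finset.mem_univ _) hmem
  · apply Finset.sum_eq_zero
    intro j _
    rw [if_neg]
    intro hc
    exact h (hc ▸ j.isLt)

lemma spectrum_root (N : ℕ) (hN2 : 2 ≤ N) (J : ℕ → ℝ)
    (hJpos : ∀ n, 1 ≤ n → n ≤ N - 1 → 0 < J n)
    (H : Matrix (Fin N) (Fin N) ℝ)
    (hH : ∀ i j : Fin N, H i j =
      if (i : ℕ) + 1 = (j : ℕ) then J ((i : ℕ) + 1)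
      else if (j : ℕ) + 1 = (i : ℕ) then J ((j : ℕ) + 1) else 0)
    (lam : ℝ) (hlam : lam ∈ spectrum ℝ H) :
    eval lam (cP J N) = 0 := by
  rw [spectrum.mem_iff] at hlam
  have hdet : ((algebraMap ℝ (Matrix (Fin N) (Fin N) ℝ) lam) - H).det = 0 := by
    by_contra hne
    exact hlam ((Matrix.isUnit_iff_isUnit_det _).mpr (isUnit_iff_ne_zero.mpr hne))
  obtain ⟨v, hv0, hvA⟩ := Matrix.exists_mulVec_eq_zero_iff.mpr hdet
  rw [Algebra.algebraMap_eq_smul_one, Matrix.sub_mulVec, Matrix.smul_mulVec,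
    Matrix.one_mulVec, sub_eq_zero] at hvA
  have hEig : ∀ i : Fin N, (∑ j, H i j * v j) = lam * v i := by
    intro i
    have h1 := congrFun hvA.symm i
    simpa [Matrix.mulVec, dotProduct] using h1
  set u : ℕ → ℝ := fun n => if h : n < N then v ⟨n, h⟩ else 0 with hu
  have huv : ∀ i : Fin N, u (i:ℕ) = v i := by
    intro i; simp [hu, i.isLt]
  have hud : ∀ (c : ℕ) (a : ℝ), (if h : c < N then a * v ⟨c,h⟩ else 0) = a * u c := by
    intro c a
    by_cases h : c < N <;> simp [hu, h]
  have hrow : ∀ i : Fin N, lam * u (i:ℕ) =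
      J ((i:ℕ)+1) * u ((i:ℕ)+1) + (if (i:ℕ) = 0 then 0 else J (i:ℕ) * u ((i:ℕ)-1)) := by
    intro i
    rw [huv, ← hEig i]
    by_cases hi0 : (i:ℕ) = 0
    · have hs0 : ∀ j : Fin N, H i j * v j =
          (if (i:ℕ)+1 = (j:ℕ) then J ((i:ℕ)+1) * v j else 0) := by
        intro j
        rw [hH]
        have h2 : ¬((j:ℕ)+1 = (i:ℕ)) := by omega
        by_cases h1 : (i:ℕ)+1 = (j:ℕ) <;> simp [h1, h2]
      rw [Finset.sum_congr rfl (fun j _ => hs0 j), sum_if_coe ((i:ℕ)+1)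
        (fun j => J ((i:ℕ)+1) * v j), hud, if_pos hi0, add_zero]
    · have hs1 : ∀ j : Fin N, H i j * v j =
          (if (i:ℕ)+1 = (j:ℕ) then J ((i:ℕ)+1) * v j else 0) +
          (if (i:ℕ)-1 = (j:ℕ) then J (i:ℕ) * v j else 0) := by
        intro j
        rw [hH]
        rcases eq_or_ne ((i:ℕ)+1) (j:ℕ) with h1 | h1
        · have h2 : ¬((j:ℕ)+1 = (i:ℕ)) := by omega
          have h3 : ¬((i:ℕ)-1 = (j:ℕ)) := by omega
          simp [h1, h2, h3]
        · rcases eq_or_ne ((j:ℕ)+1) (i:ℕ) with h2 | h2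
          · have h3 : (i:ℕ)-1 = (j:ℕ) := by omega
            rw [if_neg h1, if_pos h2, if_neg h1, if_pos h3, h2]
            ring
          · have h3 : ¬((i:ℕ)-1 = (j:ℕ)) := by omega
            simp [h1, h2, h3]
      rw [Finset.sum_congr rfl (fun j _ => hs1 j), Finset.sum_add_distrib,
        sum_if_coe ((i:ℕ)+1) (fun j => J ((i:ℕ)+1) * v j), hud,
        sum_if_coe ((i:ℕ)-1) (fun j => J ((i:ℕ)) * v j), hud, if_neg hi0]
  -- basic step relations
  have step0 : lam * u 0 = J 1 * u 1 := by
    have h := hrow ⟨0, by omega⟩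
    simpa using h
  have stepn : ∀ n, 1 ≤ n → n < N → lam * u n = J (n+1) * u (n+1) + J n * u (n-1) := by
    intro n h1 h2
    have h := hrow ⟨n, h2⟩
    rw [if_neg (by simpa using (by omega : ¬ n = 0))] at h
    exact h
  have hw : ∀ n, n ≤ N - 1 → (∏ t ∈ Finset.Icc 1 n, J t) * u n = eval lam (cP J n) * u 0 := by
    intro n
    induction n using Nat.twoStepInduction with
    | zero =>
      intro _
      rw [show cP J 0 = 1 from rfl, eval_one, one_mul,
        show Finset.Icc 1 0 = ∅ from rfl, Finset.prod_empty, one_mul]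
    | one =>
      intro _
      rw [show cP J 1 = X from rfl, eval_X]
      have h1 : ∏ t ∈ Finset.Icc 1 1, J t = J 1 := by simp
      rw [h1, ← step0]
    | more n ih ih1 =>
      intro h2
      have hA := ih (by omega)
      have hB := ih1 (by omega)
      have hstep := stepn (n+1) (by omega) (by omega)
      rw [show n+1-1 = n from rfl] at hstep
      have e1 : ∏ t ∈ Finset.Icc 1 (n+2), J t = (∏ t ∈ Finset.Icc 1 (n+1), J t) * J (n+2) := by
        rw [Finset.prod_Icc_succ_top (by omega)]
      have e2 : ∏ t ∈ Finset.Icc 1 (n+1), J t = (∏ t ∈ Finset.Icc 1 n, J t) * J (n+1) := by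
        rw [Finset.prod_Icc_succ_top (by omega)]
      have ev : eval lam (cP J (n+2)) =
          lam * eval lam (cP J (n+1)) - (J (n+1))^2 * eval lam (cP J n) := by
        rw [show cP J (n+2) = X * cP J (n+1) - C ((J (n+1))^2) * cP J n from rfl]
        simp
      rw [e1, ev]
      linear_combination -(∏ t ∈ Finset.Icc 1 (n+1), J t) * hstep + lam * hB -
        (J (n+1))^2 * hA - (J (n+1) * u n) * e2
  -- last row gives the root equation
  have hNfin : eval lam (cP J N) * u 0 = 0 := by
    have hstepN := stepn (N-1) (by omega) (by omega)
    have huN : u N = 0 := by simp [hu]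
    rw [show N-1+1 = N from by omega, huN, mul_zero, zero_add,
      show N-1-1 = N-2 from by omega] at hstepN
    have hwN1 := hw (N-1) (le_refl _)
    have hwN2 := hw (N-2) (by omega)
    have evN : eval lam (cP J N) =
        lam * eval lam (cP J (N-1)) - (J (N-1))^2 * eval lam (cP J (N-2)) := by
      have hNe : N = (N-1)+1 := by omega
      conv_lhs => rw [hNe]
      rw [cP_rec J (by omega : 1 ≤ N-1)]
      rw [show N-1-1 = N-2 from by omega]
      simp
    have e2 : ∏ t ∈ Finset.Icc 1 (N-1), J t = (∏ t ∈ Finset.Icc 1 (N-2), J t) * J (N-1) := by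
      rw [show N-1 = (N-2)+1 from by omega, Finset.prod_Icc_succ_top (by omega),
        show N-2+1 = N-1 from by omega]
    rw [evN]
    linear_combination -lam * hwN1 + (J (N-1))^2 * hwN2 +
      (∏ t ∈ Finset.Icc 1 (N-1), J t) * hstepN + (J (N-1) * u (N-2)) * e2
  have hu0 : u 0 ≠ 0 := by
    intro h0
    apply hv0
    have hz : ∀ n, n ≤ N-1 → u n = 0 := by
      intro n hn
      have h := hw n hn
      rw [h0, mul_zero] at h
      have hp : (0:ℝ) < ∏ t ∈ Finset.Icc 1 n, J t :=
        Finset.prod_pos (fun t ht => hJpos t (Finset.mem_Icc.mp ht).1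
          (le_trans (Finset.mem_Icc.mp ht).2 hn))
      exact (mul_eq_zero.mp h).resolve_left (ne_of_gt hp)
    funext i
    have : u (i:ℕ) = 0 := hz (i:ℕ) (by omega)
    rw [huv] at this
    simpa using this
  exact (mul_eq_zero.mp hNfin).resolve_right hu0

lemma derivative_finset_prod (s : Finset ℕ) (f : ℕ → ℝ[X]) :
    derivative (∏ i ∈ s, f i) = ∑ i ∈ s, (∏ j ∈ s.erase i, f j) * derivative (f i) := by
  classical
  induction s using Finset.induction_on with
  | empty => simp
  | @insert a s ha ih =>
    rw [Finset.prod_insert ha, derivative_mul, ih, Finset.sum_insert ha,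
      Finset.erase_insert ha, Finset.mul_sum]
    congr 1
    · ring
    · apply Finset.sum_congr rfl
      intro i hi
      rw [Finset.erase_insert_of_ne (by rintro rfl; exact ha hi),
        Finset.prod_insert (fun h => ha (Finset.mem_of_mem_erase h))]
      ring

lemma qp_root (M : ℕ) (qp qm p : ℝ[X])
    (hp : p = ∏ k ∈ Finset.Icc 1 M, (X^2 - C (((k:ℝ)^2)^2)))
    (hfac : qp * qm = p)
    (hW : ∀ x:ℝ, 0 < eval x qp * eval x (derivative qm) - eval x (derivative qp) * eval x qm) :
    ∀ k ∈ Finset.Icc 1 M, eval ((-1:ℝ)^(M-k+1) * (k:ℝ)^2) qp = 0 := by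
  intro k hk
  obtain ⟨hk1, hk2⟩ := Finset.mem_Icc.mp hk
  have hscast : (0:ℝ) < (k:ℝ) := by exact_mod_cast hk1
  have hk0 : (0:ℝ) < (k:ℝ)^2 := by positivity
  set s : ℝ := (-1:ℝ)^(M-k) with hs
  have hs2 : s^2 = 1 := by
    rw [hs, ← pow_mul]
    exact Even.neg_one_pow ⟨M-k, by ring⟩
  have hx1 : (-1:ℝ)^(M-k+1) * (k:ℝ)^2 = -s * (k:ℝ)^2 := by
    rw [pow_succ, hs]; ring
  rw [hx1]
  set x₀ : ℝ := -s * (k:ℝ)^2 with hx0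
  have hx2 : x₀^2 = ((k:ℝ)^2)^2 := by
    have : x₀^2 = s^2 * ((k:ℝ)^2)^2 := by rw [hx0]; ring
    rw [this, hs2, one_mul]
  have hfk : eval x₀ ((X:ℝ[X])^2 - C (((k:ℝ)^2)^2)) = 0 := by
    simp [hx2]
  have hpev : eval x₀ p = 0 := by
    rw [hp, eval_prod]
    exact Finset.prod_eq_zero hk hfk
  have hder : eval x₀ (derivative p) =
      (∏ i ∈ (Finset.Icc 1 M).erase k, (((k:ℝ)^2)^2 - ((i:ℝ)^2)^2)) * (2 * x₀) := by
    rw [hp, derivative_finset_prod, eval_finset_sum, Finset.sum_eq_single k]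
    · rw [eval_mul, eval_prod]
      congr 1
      · apply Finset.prod_congr rfl
        intro i _
        simp [hx2]
      · rw [derivative_sub, derivative_C, derivative_X_pow]
        simp
    · intro j hj hjk
      rw [eval_mul, eval_prod]
      rw [Finset.prod_eq_zero (Finset.mem_erase.mpr ⟨Ne.symm hjk, hk⟩) hfk, zero_mul]
    · intro hkk
      exact absurd hk hkk
  have hsplit : (Finset.Icc 1 M).erase k = Finset.Icc 1 (k-1) ∪ Finset.Icc (k+1) M := by
    ext i
    simp only [Finset.mem_erase, Finset.mem_Icc, Finset.mem_union]
    omega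
  have hdisj : Disjoint (Finset.Icc 1 (k-1)) (Finset.Icc (k+1) M) := by
    rw [Finset.disjoint_left]
    intro i h1 h2
    simp only [Finset.mem_Icc] at h1 h2
    omega
  have h1pos : 0 < ∏ i ∈ Finset.Icc 1 (k-1), (((k:ℝ)^2)^2 - ((i:ℝ)^2)^2) := by
    apply Finset.prod_pos
    intro i hi
    have hik : i < k := by
      have := (Finset.mem_Icc.mp hi).2; omega
    have hikr : (i:ℝ) < (k:ℝ) := by exact_mod_cast hik
    have h0 : (0:ℝ) ≤ (i:ℝ) := Nat.cast_nonneg i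
    have a : (i:ℝ)^2 < (k:ℝ)^2 := by nlinarith
    nlinarith [mul_pos (sub_pos.mpr a) (show (0:ℝ) < (k:ℝ)^2 + (i:ℝ)^2 by positivity)]
  have h2eq : ∏ i ∈ Finset.Icc (k+1) M, (((k:ℝ)^2)^2 - ((i:ℝ)^2)^2)
      = s * ∏ i ∈ Finset.Icc (k+1) M, (((i:ℝ)^2)^2 - ((k:ℝ)^2)^2) := by
    have hc : ∀ i ∈ Finset.Icc (k+1) M, (((k:ℝ)^2)^2 - ((i:ℝ)^2)^2)
        = (-1) * (((i:ℝ)^2)^2 - ((k:ℝ)^2)^2) := by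
      intro i _; ring
    rw [Finset.prod_congr rfl hc, Finset.prod_mul_distrib, Finset.prod_const, Nat.card_Icc,
      show M + 1 - (k+1) = M - k from by omega, hs]
  have h2pos : 0 < ∏ i ∈ Finset.Icc (k+1) M, (((i:ℝ)^2)^2 - ((k:ℝ)^2)^2) := by
    apply Finset.prod_pos
    intro i hi
    have hik : k < i := by
      have := (Finset.mem_Icc.mp hi).1; omega
    have hikr : (k:ℝ) < (i:ℝ) := by exact_mod_cast hik
    have h0 : (0:ℝ) ≤ (k:ℝ) := Nat.cast_nonneg k
    have a : (k:ℝ)^2 < (i:ℝ)^2 := by nlinarith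
    nlinarith [mul_pos (sub_pos.mpr a) (show (0:ℝ) < (i:ℝ)^2 + (k:ℝ)^2 by positivity)]
  have hderneg : eval x₀ (derivative p) < 0 := by
    rw [hder, hsplit, Finset.prod_union hdisj, h2eq]
    have hrw : (∏ i ∈ Finset.Icc 1 (k-1), (((k:ℝ)^2)^2 - ((i:ℝ)^2)^2)) *
        (s * ∏ i ∈ Finset.Icc (k+1) M, (((i:ℝ)^2)^2 - ((k:ℝ)^2)^2)) * (2 * x₀)
        = -2 * s^2 * ((∏ i ∈ Finset.Icc 1 (k-1), (((k:ℝ)^2)^2 - ((i:ℝ)^2)^2)) *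
          (∏ i ∈ Finset.Icc (k+1) M, (((i:ℝ)^2)^2 - ((k:ℝ)^2)^2)) * (k:ℝ)^2) := by
      rw [hx0]; ring
    rw [hrw, hs2]
    nlinarith [mul_pos (mul_pos h1pos h2pos) hk0]
  have h0 : eval x₀ qp * eval x₀ qm = 0 := by
    rw [← eval_mul, hfac]; exact hpev
  rcases mul_eq_zero.mp h0 with h | h
  · exact h
  · exfalso
    have hdp : derivative p = derivative qp * qm + qp * derivative qm := by
      rw [← hfac, derivative_mul]
    rw [hdp, eval_add, eval_mul, eval_mul, h, mul_zero, zero_add] at hderneg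
    have hWx := hW x₀
    rw [h, mul_zero, sub_zero] at hWx
    linarith

lemma neg_one_pow_sq (m : ℕ) : (((-1:ℝ))^m)^2 = 1 := by
  rw [← pow_mul]
  exact Even.neg_one_pow ⟨m, by ring⟩

lemma nat_pow4_inj {a b : ℕ} (h : (((a:ℝ))^2)^2 = (((b:ℝ))^2)^2) : a = b := by
  rcases lt_trichotomy a b with hl | he | hl
  · exfalso
    have hr : (a:ℝ) < b := by exact_mod_cast hl
    have h0 : (0:ℝ) ≤ a := Nat.cast_nonneg a
    have h2 : ((a:ℝ))^2 < ((b:ℝ))^2 := by nlinarith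
    have h4 : (((a:ℝ))^2)^2 < (((b:ℝ))^2)^2 := by nlinarith [sq_nonneg ((a:ℝ))]
    exact absurd h (ne_of_lt h4)
  · exact he
  · exfalso
    have hr : (b:ℝ) < a := by exact_mod_cast hl
    have h0 : (0:ℝ) ≤ b := Nat.cast_nonneg b
    have h2 : ((b:ℝ))^2 < ((a:ℝ))^2 := by nlinarith
    have h4 : (((b:ℝ))^2)^2 < (((a:ℝ))^2)^2 := by nlinarith [sq_nonneg ((b:ℝ))]
    exact absurd h (ne_of_gt h4)

lemma altsum : ∀ M : ℕ, (∑ k ∈ Finset.Icc 1 M, (-1:ℝ)^(M-k) * (k:ℝ)^2) = M*(M+1)/2 := by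
  intro M
  induction M with
  | zero => simp
  | succ M ih =>
    rw [Finset.sum_Icc_succ_top (by omega)]
    have hc : ∀ k ∈ Finset.Icc 1 M, (-1:ℝ)^(M+1-k) * (k:ℝ)^2
        = -((-1:ℝ)^(M-k) * (k:ℝ)^2) := by
      intro k hk
      have hkM : k ≤ M := (Finset.mem_Icc.mp hk).2
      rw [show M+1-k = (M-k)+1 from by omega, pow_succ]
      ring
    rw [Finset.sum_congr rfl hc, Finset.sum_neg_distrib, ih]
    rw [Nat.sub_self, pow_zero]
    push_cast
    ring

/-- If a mirror-symmetric field-free XX chain of even length `N` has single-excitation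
spectrum `±1, ±2², …, ±(N/2)²` and maximum coupling strength rescaled to `1`, then its
perfect state transfer time `t₀ = (π/2)·J_max` satisfies `t₀ ≥ (π/16)·N(N+2)`. -/
theorem quadratic_chain_transfer_time_even (N : ℕ) (hN : Even N) (hNpos : 0 < N)
    (J : ℕ → ℝ) (hJpos : ∀ n, 1 ≤ n → n ≤ N - 1 → 0 < J n)
    (hmirror : ∀ n, 1 ≤ n → n ≤ N - 1 → J n = J (N - n))
    (H : Matrix (Fin N) (Fin N) ℝ)
    (hH : ∀ i j : Fin N, H i j =
      if (i : ℕ) + 1 = (j : ℕ) then J ((i : ℕ) + 1)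
      else if (j : ℕ) + 1 = (i : ℕ) then J ((j : ℕ) + 1) else 0)
    (hspec : spectrum ℝ H =
      {x : ℝ | ∃ k : ℕ, 1 ≤ k ∧ k ≤ N / 2 ∧ (x = (k : ℝ) ^ 2 ∨ x = -((k : ℝ) ^ 2))})
    (Jmax : ℝ)
    (hub : ∀ n, 1 ≤ n → n ≤ N - 1 → J n ≤ Jmax)
    (hmem : ∃ n, 1 ≤ n ∧ n ≤ N - 1 ∧ J n = Jmax) :
    Real.pi / 2 * Jmax ≥ Real.pi / 16 * (N * (N + 2)) := by
  obtain ⟨m, hm⟩ := hN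
  set M : ℕ := N / 2 with hMdef
  have hNM : N = 2 * M := by omega
  have hM1 : 1 ≤ M := by omega
  have hN2 : 2 ≤ N := by omega
  have hMN : M ≤ N - 1 := by omega
  -- every claimed spectral point is a root of cP J N
  have hroot : ∀ k : ℕ, 1 ≤ k → k ≤ M →
      eval ((k:ℝ)^2) (cP J N) = 0 ∧ eval (-((k:ℝ)^2)) (cP J N) = 0 := by
    intro k h1 h2
    constructor <;>
    · apply spectrum_root N hN2 J hJpos H hH
      rw [hspec]
      exact ⟨k, h1, h2, by simp⟩
  -- the product polynomial
  set p : ℝ[X] := ∏ k ∈ Finset.Icc 1 M, (X^2 - C (((k:ℝ)^2)^2)) with hp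
  have hpmonic : p.Monic :=
    monic_prod_of_monic _ _ (fun k _ => monic_X_pow_sub_C _ (by norm_num))
  have hpdeg : p.natDegree = 2*M := by
    rw [hp, natDegree_prod_of_monic _ _ (fun k _ => monic_X_pow_sub_C _ (by norm_num))]
    have : ∀ k ∈ Finset.Icc 1 M, ((X:ℝ[X])^2 - C (((k:ℝ)^2)^2)).natDegree = 2 :=
      fun k _ => natDegree_X_pow_sub_C
    rw [Finset.sum_congr rfl this, Finset.sum_const, Nat.card_Icc, smul_eq_mul]
    omega
  -- the root set T
  set T : Finset ℝ := ((Finset.Icc 1 M).image fun k : ℕ => ((k:ℝ)^2)) ∪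
      ((Finset.Icc 1 M).image fun k : ℕ => -((k:ℝ)^2)) with hT
  have hinj1 : Set.InjOn (fun k : ℕ => ((k:ℝ)^2)) (Finset.Icc 1 M) := by
    intro a _ b _ h
    apply nat_pow4_inj
    simp only at h
    rw [h]
  have hinj2 : Set.InjOn (fun k : ℕ => -((k:ℝ)^2)) (Finset.Icc 1 M) := by
    intro a _ b _ h
    apply nat_pow4_inj
    simp only [neg_inj] at h
    rw [h]
  have hdisjT : Disjoint ((Finset.Icc 1 M).image fun k : ℕ => ((k:ℝ)^2))
      ((Finset.Icc 1 M).image fun k : ℕ => -((k:ℝ)^2)) := by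
    rw [Finset.disjoint_left]
    intro x hx1 hx2
    obtain ⟨a, ha, rfl⟩ := Finset.mem_image.mp hx1
    obtain ⟨b, hb, hbe⟩ := Finset.mem_image.mp hx2
    have ha1 : 1 ≤ a := (Finset.mem_Icc.mp ha).1
    have hb1 : 1 ≤ b := (Finset.mem_Icc.mp hb).1
    have har : (1:ℝ) ≤ a := by exact_mod_cast ha1
    have hbr : (1:ℝ) ≤ b := by exact_mod_cast hb1
    nlinarith [hbe]
  have hTcard : T.card = 2*M := by
    rw [hT, Finset.card_union_of_disjoint hdisjT,
      Finset.card_image_of_injOn hinj1, Finset.card_image_of_injOn hinj2, Nat.card_Icc]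
    omega
  -- cP J N = p
  have hPN : cP J N = p := by
    have hevalT : ∀ x ∈ T, eval x (cP J N - p) = 0 := by
      intro x hx
      rw [eval_sub]
      rcases Finset.mem_union.mp hx with hx1 | hx1
      · obtain ⟨k, hk, rfl⟩ := Finset.mem_image.mp hx1
        obtain ⟨h1, h2⟩ := Finset.mem_Icc.mp hk
        rw [(hroot k h1 h2).1, hp, eval_prod, Finset.prod_eq_zero hk (by simp)]
        ring
      · obtain ⟨k, hk, rfl⟩ := Finset.mem_image.mp hx1
        obtain ⟨h1, h2⟩ := Finset.mem_Icc.mp hk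
        rw [(hroot k h1 h2).2, hp, eval_prod, Finset.prod_eq_zero hk (by simp)]
        ring
    rcases eq_or_ne (cP J N - p) 0 with hz | hz
    · exact sub_eq_zero.mp hz
    · have hdegeq : (cP J N).degree = p.degree := by
        rw [degree_eq_natDegree (cP_monic J N).1.ne_zero,
          degree_eq_natDegree hpmonic.ne_zero, (cP_monic J N).2, hpdeg, hNM]
      have hlc : (cP J N).leadingCoeff = p.leadingCoeff := by
        rw [(cP_monic J N).1.leadingCoeff, hpmonic.leadingCoeff]
      have hdlt := degree_sub_lt hdegeq (cP_monic J N).1.ne_zero hlc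
      have hnd : (cP J N - p).natDegree < T.card := by
        rw [hTcard]
        have := (natDegree_lt_iff_degree_lt hz).mpr
          (lt_of_lt_of_le hdlt (by rw [degree_eq_natDegree (cP_monic J N).1.ne_zero,
            (cP_monic J N).2, hNM]))
        exact this
      exact sub_eq_zero.mp (eq_zero_of_natDegree_lt_card_of_eval_eq_zero' _ T hevalT hnd)
  -- the two half polynomials
  set qp : ℝ[X] := cP J M + C (J M) * cP J (M-1) with hqp
  set qm : ℝ[X] := cP J M - C (J M) * cP J (M-1) with hqm
  have hfac : qp * qm = p := by
    rw [← hPN, cP_split J N M hNM hM1 hmirror, hqp, hqm,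
      show (C ((J M)^2) : ℝ[X]) = C (J M) * C (J M) from by rw [← C_mul]; ring_nf]
    ring
  have hJMpos : 0 < J M := hJpos M hM1 hMN
  have hW : ∀ x:ℝ, 0 < eval x qp * eval x (derivative qm) - eval x (derivative qp) * eval x qm := by
    intro x
    have hid : qp * derivative qm - derivative qp * qm
        = C (J M) * (2 * (derivative (cP J M) * cP J (M-1)
          - cP J M * derivative (cP J (M-1)))) := by
      rw [hqp, hqm]
      simp only [derivative_add, derivative_sub, derivative_mul, derivative_C,
        zero_mul, zero_add]
      ring
    have h2 := congrArg (eval x) hid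
    simp only [eval_mul, eval_sub, eval_add, eval_C, eval_ofNat] at h2
    rw [h2]
    have hWx := cP_wron J M hM1 (fun t ht htM => ne_of_gt (hJpos t ht (by omega))) x
    simp only [eval_sub, eval_mul] at hWx
    nlinarith [hWx, hJMpos]
  have hqroots := qp_root M qp qm p hp hfac hW
  -- qp equals the explicit product g
  set g : ℝ[X] := ∏ k ∈ Finset.Icc 1 M, (X - C ((-1:ℝ)^(M-k+1) * (k:ℝ)^2)) with hg
  have hgmonic : g.Monic := monic_prod_of_monic _ _ (fun k _ => monic_X_sub_C _)
  have hgdeg : g.natDegree = M := by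
    rw [hg, natDegree_prod_of_monic _ _ (fun k _ => monic_X_sub_C _)]
    have : ∀ k ∈ Finset.Icc 1 M, ((X:ℝ[X]) - C ((-1:ℝ)^(M-k+1) * (k:ℝ)^2)).natDegree = 1 :=
      fun k _ => natDegree_X_sub_C _
    rw [Finset.sum_congr rfl this, Finset.sum_const, Nat.card_Icc, smul_eq_mul]
    omega
  have hCMdeg : (C (J M) * cP J (M-1)).degree < (cP J M).degree := by
    calc (C (J M) * cP J (M-1)).degree ≤ (C (J M)).degree + (cP J (M-1)).degree :=
          degree_mul_le _ _
      _ ≤ 0 + ((M-1 : ℕ) : WithBot ℕ) := add_le_add degree_C_le (by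
          have := degree_le_natDegree (p := cP J (M-1))
          rwa [(cP_monic J (M-1)).2] at this)
      _ = ((M-1 : ℕ) : WithBot ℕ) := zero_add _
      _ < ((M : ℕ) : WithBot ℕ) := by exact_mod_cast by omega
      _ = (cP J M).degree := by
          rw [degree_eq_natDegree (cP_monic J M).1.ne_zero, (cP_monic J M).2]
  have hqpmonic : qp.Monic := by
    rw [hqp]
    exact (cP_monic J M).1.add_of_left hCMdeg
  have hqpdeg : qp.natDegree = M := by
    have hdeg : qp.degree = (cP J M).degree := by
      rw [hqp]
      exact degree_add_eq_left_of_degree_lt hCMdeg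
    rw [degree_eq_natDegree (cP_monic J M).1.ne_zero, (cP_monic J M).2] at hdeg
    exact natDegree_eq_of_degree_eq_some hdeg
  set T2 : Finset ℝ := (Finset.Icc 1 M).image (fun k : ℕ => (-1:ℝ)^(M-k+1) * (k:ℝ)^2) with hT2
  have hinj3 : Set.InjOn (fun k : ℕ => (-1:ℝ)^(M-k+1) * (k:ℝ)^2) (Finset.Icc 1 M) := by
    intro a _ b _ h
    apply nat_pow4_inj
    have := congrArg (fun y : ℝ => y^2) h
    simp only [mul_pow, neg_one_pow_sq, one_mul] at this
    exact this
  have hT2card : T2.card = M := by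
    rw [hT2, Finset.card_image_of_injOn hinj3, Nat.card_Icc]
    omega
  have hqpg : qp = g := by
    have hevalT2 : ∀ x ∈ T2, eval x (qp - g) = 0 := by
      intro x hx
      obtain ⟨k, hk, rfl⟩ := Finset.mem_image.mp hx
      rw [eval_sub, hqroots k hk, hg, eval_prod, Finset.prod_eq_zero hk (by simp)]
      ring
    rcases eq_or_ne (qp - g) 0 with hz | hz
    · exact sub_eq_zero.mp hz
    · have hdegeq : qp.degree = g.degree := by
        rw [degree_eq_natDegree hqpmonic.ne_zero, degree_eq_natDegree hgmonic.ne_zero,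
          hqpdeg, hgdeg]
      have hlc : qp.leadingCoeff = g.leadingCoeff := by
        rw [hqpmonic.leadingCoeff, hgmonic.leadingCoeff]
      have hdlt := degree_sub_lt hdegeq hqpmonic.ne_zero hlc
      have hnd : (qp - g).natDegree < T2.card := by
        rw [hT2card]
        exact (natDegree_lt_iff_degree_lt hz).mpr
          (lt_of_lt_of_le hdlt (by rw [degree_eq_natDegree hqpmonic.ne_zero, hqpdeg]))
      exact sub_eq_zero.mp (eq_zero_of_natDegree_lt_card_of_eval_eq_zero' _ T2 hevalT2 hnd)
  -- extract the subleading coefficient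
  have hcoeff_qp : qp.coeff (M-1) = J M := by
    rw [hqp, coeff_add, coeff_C_mul]
    have h1 : (cP J M).coeff (M-1) = 0 := by
      have := cP_subcoeff J (M-1)
      rwa [show M-1+1 = M from by omega] at this
    have h2 : (cP J (M-1)).coeff (M-1) = 1 := by
      have := (cP_monic J (M-1)).1.coeff_natDegree
      rwa [(cP_monic J (M-1)).2] at this
    rw [h1, h2]
    ring
  have hcoeff_g : g.coeff (M-1) = -∑ k ∈ Finset.Icc 1 M, ((-1:ℝ)^(M-k+1) * (k:ℝ)^2) := by
    have hnc := prod_X_sub_C_nextCoeff (s := Finset.Icc 1 M)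
      (f := fun k => (-1:ℝ)^(M-k+1) * (k:ℝ)^2)
    rw [← hg] at hnc
    rw [← hnc, nextCoeff_of_natDegree_pos (by omega : 0 < g.natDegree), hgdeg]
  have hJM : J M = (M:ℝ)*((M:ℝ)+1)/2 := by
    have h := hcoeff_qp
    rw [hqpg, hcoeff_g] at h
    have hsum : ∀ k ∈ Finset.Icc 1 M, (-1:ℝ)^(M-k+1) * (k:ℝ)^2
        = -((-1:ℝ)^(M-k) * (k:ℝ)^2) := by
      intro k _
      rw [pow_succ]
      ring
    rw [Finset.sum_congr rfl hsum, Finset.sum_neg_distrib, neg_neg, altsum M] at h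
    linarith [h]
  -- conclude
  have hJle : J M ≤ Jmax := hub M hM1 hMN
  have hNr : (N:ℝ) = 2*(M:ℝ) := by exact_mod_cast congrArg (Nat.cast (R := ℝ)) hNM
  rw [ge_iff_le, hNr]
  nlinarith [Real.pi_pos, mul_nonneg (le_of_lt Real.pi_pos)
    (by rw [← hJM]; linarith : (0:ℝ) ≤ Jmax - (M:ℝ)*((M:ℝ)+1)/2)]
end

section
/- Let λ ∈ [0,1] satisfy λ ≤ 1-λ² ≤ 2λ. Then for every integer n ≥ 1, 2(λ^{n-1}-1)λ - ((1-λ²)^{n-1}-1)(1-λ²) ≤ 0; i.e., F_n ≤ F₁ where F_n = (1/6)(4 + 2λⁿ - (1-λ²)ⁿ). -/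
/-- If `λ ∈ [0,1]` satisfies `λ ≤ 1-λ² ≤ 2λ`, then for every `n ≥ 1`,
`2(λ^(n-1)-1)λ - ((1-λ²)^(n-1)-1)(1-λ²) ≤ 0`; i.e. `F_n ≤ F₁` where
`F_n = (1/6)(4 + 2λⁿ - (1-λ²)ⁿ)`. -/
theorem single_excitation_optimal_middle_range (lam : ℝ)
    (h0 : 0 ≤ lam) (h1 : lam ≤ 1)
    (hlow : lam ≤ 1 - lam ^ 2) (hhigh : 1 - lam ^ 2 ≤ 2 * lam) :
    ∀ n : ℕ, 1 ≤ n →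
      2 * (lam ^ (n - 1) - 1) * lam - ((1 - lam ^ 2) ^ (n - 1) - 1) * (1 - lam ^ 2) ≤ 0 ∧
      (1 / 6) * (4 + 2 * lam ^ n - (1 - lam ^ 2) ^ n)
        ≤ (1 / 6) * (4 + 2 * lam ^ 1 - (1 - lam ^ 2) ^ 1) := by
  intro n hn
  obtain ⟨m, rfl⟩ := Nat.exists_eq_add_of_le hn
  have hm : 1 + m - 1 = m := by omega
  have hmu0 : 0 ≤ 1 - lam ^ 2 := le_trans h0 hlow
  have hmu1 : 1 - lam ^ 2 ≤ 1 := by nlinarith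
  have hpow : lam ^ m ≤ (1 - lam ^ 2) ^ m := pow_le_pow_left₀ h0 hlow m
  have hpow1 : (1 - lam ^ 2) ^ m ≤ 1 := pow_le_one₀ hmu0 hmu1
  have key : (1 - lam ^ 2) * (1 - (1 - lam ^ 2) ^ m) ≤ (2 * lam) * (1 - lam ^ m) := by
    apply mul_le_mul hhigh (by linarith) (by linarith) (by linarith)
  constructor
  · rw [hm]; linarith
  · have h2 : lam ^ (1 + m) = lam ^ m * lam := by ring
    have h3 : (1 - lam ^ 2) ^ (1 + m) = (1 - lam ^ 2) ^ m * (1 - lam ^ 2) := by ring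
    rw [h2, h3]
    nlinarith
end

section
/- Let λ ∈ [0,1] satisfy λ ≥ 1-λ². Then for every integer n ≥ 2, Δ_n = (1/6)λ²(1-λ)((1+λ)(1-λ²)^{n-1} - 2λ^{n-2}) ≤ 0; consequently F_n ≤ F₁ for all n ≥ 1, where F_n = (1/6)(4 + 2λⁿ - (1-λ²)ⁿ). -/
lemma seor_key (lam : ℝ) (h0 : 0 ≤ lam) (h1 : lam ≤ 1) (hge : 1 - lam ^ 2 ≤ lam)
    (m : ℕ) : (1 + lam) * (1 - lam ^ 2) ^ (m + 1) ≤ 2 * lam ^ m := by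
  have hb0 : (0:ℝ) ≤ 1 - lam ^ 2 := by nlinarith
  have hpow : (1 - lam ^ 2) ^ m ≤ lam ^ m := pow_le_pow_left₀ hb0 hge m
  have hpn : (0:ℝ) ≤ (1 - lam ^ 2) ^ m := pow_nonneg hb0 m
  have h2 : (1 + lam) * (1 - lam ^ 2) ≤ 2 := by nlinarith
  have h2n : (0:ℝ) ≤ (1 + lam) * (1 - lam ^ 2) := by nlinarith
  calc (1 + lam) * (1 - lam ^ 2) ^ (m + 1)
      = ((1 + lam) * (1 - lam ^ 2)) * (1 - lam ^ 2) ^ m := by ring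
    _ ≤ 2 * lam ^ m := by
        apply mul_le_mul h2 hpow hpn (by norm_num)

lemma seor_step (lam : ℝ) (h0 : 0 ≤ lam) (h1 : lam ≤ 1) (hge : 1 - lam ^ 2 ≤ lam)
    (k : ℕ) : lam ^ 2 * (1 - lam ^ 2) ^ (k + 1) ≤ 2 * (1 - lam) * lam ^ (k + 1) := by
  have hb0 : (0:ℝ) ≤ 1 - lam ^ 2 := by nlinarith
  have hpow : (1 - lam ^ 2) ^ k ≤ lam ^ k := pow_le_pow_left₀ hb0 hge k
  have hpn : (0:ℝ) ≤ (1 - lam ^ 2) ^ k := pow_nonneg hb0 k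
  have h2 : lam ^ 2 * (1 - lam ^ 2) ≤ 2 * (1 - lam) * lam := by
    nlinarith [mul_nonneg (mul_nonneg h0 (by linarith : (0:ℝ) ≤ 1 - lam))
      (by nlinarith : (0:ℝ) ≤ 2 - lam - lam ^ 2)]
  have h2n : (0:ℝ) ≤ lam ^ 2 * (1 - lam ^ 2) := by positivity
  calc lam ^ 2 * (1 - lam ^ 2) ^ (k + 1)
      = (lam ^ 2 * (1 - lam ^ 2)) * (1 - lam ^ 2) ^ k := by ring
    _ ≤ (2 * (1 - lam) * lam) * lam ^ k := by
        apply mul_le_mul h2 hpow hpn (by nlinarith)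
    _ = 2 * (1 - lam) * lam ^ (k + 1) := by ring

/-- If `λ ∈ [0,1]` satisfies `λ ≥ 1-λ²`, then for every `n ≥ 2` the increment
`Δ_n = (1/6)λ²(1-λ)((1+λ)(1-λ²)^(n-1) - 2λ^(n-2))` is nonpositive, and consequently
`F_n ≤ F₁` for all `n ≥ 1`, where `F_n = (1/6)(4 + 2λⁿ - (1-λ²)ⁿ)`. -/
theorem single_excitation_optimal_upper_range (lam : ℝ)
    (h0 : 0 ≤ lam) (h1 : lam ≤ 1) (hge : 1 - lam ^ 2 ≤ lam) :
    (∀ n : ℕ, 2 ≤ n →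
      (1 / 6) * lam ^ 2 * (1 - lam) *
        ((1 + lam) * (1 - lam ^ 2) ^ (n - 1) - 2 * lam ^ (n - 2)) ≤ 0) ∧
    (∀ n : ℕ, 1 ≤ n →
      (1 / 6) * (4 + 2 * lam ^ n - (1 - lam ^ 2) ^ n)
        ≤ (1 / 6) * (4 + 2 * lam ^ 1 - (1 - lam ^ 2) ^ 1)) := by
  constructor
  · intro n hn
    obtain ⟨m, rfl⟩ : ∃ m, n = m + 2 := ⟨n - 2, by omega⟩
    have h1' : m + 2 - 1 = m + 1 := by omega
    have h2' : m + 2 - 2 = m := by omega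
    rw [h1', h2']
    apply mul_nonpos_of_nonneg_of_nonpos
    · have : (0:ℝ) ≤ 1 - lam := by linarith
      positivity
    · have := seor_key lam h0 h1 hge m
      linarith
  · intro n hn
    induction n with
    | zero => omega
    | succ m ih =>
      rcases Nat.lt_or_ge m 1 with hm | hm
      · interval_cases m
        · norm_num
      · have hih := ih hm
        have hstep : (1 / 6) * (4 + 2 * lam ^ (m + 1) - (1 - lam ^ 2) ^ (m + 1))
            ≤ (1 / 6) * (4 + 2 * lam ^ m - (1 - lam ^ 2) ^ m) := by
          obtain ⟨k, rfl⟩ : ∃ k, m = k + 1 := ⟨m - 1, by omega⟩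
          have := seor_step lam h0 h1 hge k
          have e1 : lam ^ (k + 1 + 1) = lam * lam ^ (k + 1) := by ring
          have e2 : (1 - lam ^ 2) ^ (k + 1 + 1) = (1 - lam ^ 2) * (1 - lam ^ 2) ^ (k + 1) := by ring
          nlinarith [this]
        linarith
end

section
/- For all λ ∈ [√2 - 1, 1] and all integers n ≥ 1, F_n ≤ F₁, where F_n = (1/6)(4 + 2λⁿ - (1-λ²)ⁿ). That is, if the largest singular value λ satisfies λ ≥ √2 - 1, encoding in the single excitation subspace maximizes fidelity. -/
/-- For all `λ ∈ [√2 - 1, 1]` and all integers `n ≥ 1`, `F_n ≤ F₁`, where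
`F_n = (1/6)(4 + 2λⁿ - (1-λ²)ⁿ)`: encoding in the single excitation subspace
maximizes fidelity. -/
theorem single_excitation_optimal (lam : ℝ)
    (hlow : Real.sqrt 2 - 1 ≤ lam) (hhigh : lam ≤ 1) :
    ∀ n : ℕ, 1 ≤ n →
      (1 / 6) * (4 + 2 * lam ^ n - (1 - lam ^ 2) ^ n)
        ≤ (1 / 6) * (4 + 2 * lam ^ 1 - (1 - lam ^ 2) ^ 1) := by
  have h2 : Real.sqrt 2 ^ 2 = 2 := Real.sq_sqrt (by norm_num)
  have hs : 1 ≤ Real.sqrt 2 := by nlinarith [Real.sqrt_nonneg 2]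
  have ha0 : 0 ≤ lam := by linarith
  have hb2a : 1 - lam ^ 2 ≤ 2 * lam := by nlinarith [Real.sqrt_nonneg 2]
  have hb0 : 0 ≤ 1 - lam ^ 2 := by nlinarith
  have hb1 : 1 - lam ^ 2 ≤ 1 := by nlinarith
  intro n hn
  match n, hn with
  | 1, _ => exact le_refl _
  | 2, _ =>
    have : 2 * lam ^ 2 - (1 - lam ^ 2) ^ 2 ≤ 2 * lam ^ 1 - (1 - lam ^ 2) ^ 1 := by
      nlinarith [sq_nonneg (lam - 1), sq_nonneg lam]
    linarith
  | (m + 3), _ =>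
    set b : ℝ := 1 - lam ^ 2 with hb
    have hbm : (0:ℝ) ≤ b ^ (m + 2) := pow_nonneg hb0 _
    have key : b * (1 - b ^ (m + 2)) ≤ 2 * lam * (1 - lam ^ (m + 2)) := by
      rcases le_or_gt lam (1 / 2) with hhalf | hhalf
      · -- here b = 1 - lam^2 ≥ 3/4 ≥ lam
        have hab : lam ≤ b := by nlinarith
        have hpow : lam ^ (m + 2) ≤ b ^ (m + 2) := pow_le_pow_left₀ ha0 hab _
        have hb1' : b ^ (m + 2) ≤ 1 := pow_le_one₀ hb0 hb1
        have hfac : (0:ℝ) ≤ 1 - b ^ (m + 2) := by linarith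
        calc b * (1 - b ^ (m + 2)) ≤ (2 * lam) * (1 - b ^ (m + 2)) := by
              apply mul_le_mul_of_nonneg_right hb2a hfac
          _ ≤ (2 * lam) * (1 - lam ^ (m + 2)) := by
              apply mul_le_mul_of_nonneg_left (by linarith) (by linarith)
      · -- lam > 1/2 : chain b(1-b^{m+2}) ≤ b ≤ 2λ b ≤ 2λ(1-λ^{m+2})
        have hpa : lam ^ (m + 2) ≤ lam ^ 2 :=
          pow_le_pow_of_le_one ha0 hhigh (by omega)
        calc b * (1 - b ^ (m + 2)) ≤ b := by nlinarith
          _ ≤ 2 * lam * b := by nlinarith [mul_nonneg hb0 (by linarith : (0:ℝ) ≤ 2 * lam - 1)]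
          _ ≤ 2 * lam * (1 - lam ^ (m + 2)) := by
              apply mul_le_mul_of_nonneg_left (by rw [hb]; linarith) (by linarith)
    have e1 : lam ^ (m + 3) = lam ^ (m + 2) * lam := pow_succ _ _
    have e2 : b ^ (m + 3) = b ^ (m + 2) * b := pow_succ _ _
    have : 2 * lam ^ (m + 3) - b ^ (m + 3) ≤ 2 * lam ^ 1 - b ^ 1 := by
      rw [e1, e2, pow_one, pow_one]; nlinarith [key]
    linarith
end

section
/- If λ ≤ √2 - 1 then F_n = (1/6)(4 + 2λⁿ - (1-λ²)ⁿ) ≤ 2/3 for all n ≥ 1. -/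
/-- If `0 ≤ λ ≤ √2 - 1` then `F_n = (1/6)(4 + 2λⁿ - (1-λ²)ⁿ) ≤ 2/3` for all `n ≥ 1`. -/
theorem below_classical_threshold (lam : ℝ) (h0 : 0 ≤ lam)
    (h1 : lam ≤ Real.sqrt 2 - 1) :
    ∀ n : ℕ, 1 ≤ n →
      (1 / 6) * (4 + 2 * lam ^ n - (1 - lam ^ 2) ^ n) ≤ 2 / 3 := by
  intro n hn
  have hsq : (lam + 1) ^ 2 ≤ 2 := by
    have h2 : lam + 1 ≤ Real.sqrt 2 := by linarith
    have := Real.sq_sqrt (by norm_num : (2:ℝ) ≥ 0)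
    nlinarith [Real.sqrt_nonneg 2]
  have hkey : 2 * lam ≤ 1 - lam ^ 2 := by nlinarith
  have hlam : lam ≤ 1 - lam ^ 2 := by nlinarith
  have hpow : lam ^ (n - 1) ≤ (1 - lam ^ 2) ^ (n - 1) :=
    pow_le_pow_left₀ h0 hlam _
  have hmain : 2 * lam ^ n ≤ (1 - lam ^ 2) ^ n := by
    obtain ⟨m, rfl⟩ := Nat.exists_eq_add_of_le hn
    have e1 : lam ^ (1 + m) = lam * lam ^ m := by ring
    have e2 : (1 - lam ^ 2) ^ (1 + m) = (1 - lam ^ 2) * (1 - lam ^ 2) ^ m := by ring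
    rw [e1, e2, ← mul_assoc]
    have hm : lam ^ m ≤ (1 - lam ^ 2) ^ m := pow_le_pow_left₀ h0 hlam m
    exact mul_le_mul hkey hm (pow_nonneg h0 m) (by nlinarith)
  linarith
end

section
/- Let H_P be a Hermitian matrix with ⟨N|e^{-iH_P t₀}|1⟩ = ε where ε = ±1 (perfect state transfer up to sign), and let δH be Hermitian. Then the first-order Dyson term f₁ = -i∫₀^{t₀} ⟨N|e^{-iH_P(t₀-t)} δH e^{-iH_P t}|1⟩ dt satisfies: f₀ f₁* + f₀* f₁ = 0, where f₀ = ε. That is, the first-order correction to the fidelity |f₀+f₁|² - |f₀|² - |f₁|² vanishes. -/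
open NormedSpace Matrix

lemma exp_smul_conjTranspose (N : ℕ) (Hp : Matrix (Fin N) (Fin N) ℂ)
    (hHp : Hp.IsHermitian) (s : ℝ) :
    (exp ((-Complex.I * s) • Hp))ᴴ = exp ((Complex.I * s) • Hp) := by
  rw [← Matrix.exp_conjTranspose, Matrix.conjTranspose_smul, hHp.eq]
  congr 1
  simp [Complex.conj_ofReal]

lemma exp_smul_unitary (N : ℕ) (Hp : Matrix (Fin N) (Fin N) ℂ)
    (hHp : Hp.IsHermitian) (s : ℝ) :
    exp ((-Complex.I * s) • Hp) * (exp ((-Complex.I * s) • Hp))ᴴ = 1 := by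
  rw [exp_smul_conjTranspose N Hp hHp s, ← Matrix.exp_add_of_commute]
  · rw [← add_smul]
    ring_nf
    simp [exp_zero]
  · exact (Commute.refl Hp).smul_left _ |>.smul_right _

/-- If `⟨N|e^{-iH_P t₀}|1⟩ = ε` with `ε = ±1` (perfect state transfer up to sign) and
`δH` is Hermitian, then the first-order Dyson term
`f₁ = -i∫₀^{t₀} ⟨N|e^{-iH_P(t₀-t)} δH e^{-iH_P t}|1⟩ dt` satisfies
`f₀ f₁* + f₀* f₁ = 0` where `f₀ = ε`: the first-order correction to the fidelity
vanishes. -/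
theorem first_order_correction_vanishes (N : ℕ) (hNpos : 0 < N)
    (Hp dH : Matrix (Fin N) (Fin N) ℂ) (hHp : Hp.IsHermitian) (hdH : dH.IsHermitian)
    (t₀ : ℝ) (ε : ℝ) (hε : ε = 1 ∨ ε = -1)
    (hpst : exp ((-Complex.I * t₀) • Hp) ⟨N - 1, by omega⟩ ⟨0, hNpos⟩ = (ε : ℂ)) :
    (ε : ℂ) * (starRingEnd ℂ)
        (-Complex.I * ∫ t in (0:ℝ)..t₀,
          (exp ((-Complex.I * (t₀ - t)) • Hp) * dH * exp ((-Complex.I * t) • Hp))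
            ⟨N - 1, by omega⟩ ⟨0, hNpos⟩)
      + (starRingEnd ℂ) ((ε : ℂ)) *
        (-Complex.I * ∫ t in (0:ℝ)..t₀,
          (exp ((-Complex.I * (t₀ - t)) • Hp) * dH * exp ((-Complex.I * t) • Hp))
            ⟨N - 1, by omega⟩ ⟨0, hNpos⟩) = 0 := by
  set iN : Fin N := ⟨N - 1, by omega⟩
  set i0 : Fin N := ⟨0, hNpos⟩
  set U₀ := exp ((-Complex.I * t₀) • Hp) with hU₀
  -- row N-1 of U₀ is ε e₀ᵀ
  have hrow : ∀ j : Fin N, j ≠ i0 → U₀ iN j = 0 := by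
    intro j hj
    have huni := exp_smul_unitary N Hp hHp t₀
    have hdiag : (U₀ * U₀ᴴ) iN iN = 1 := by rw [huni]; simp [Matrix.one_apply]
    rw [Matrix.mul_apply] at hdiag
    have hsum : ∑ k, Complex.normSq (U₀ iN k) = 1 := by
      have : ∀ k, U₀ iN k * U₀ᴴ k iN = (Complex.normSq (U₀ iN k) : ℂ) := by
        intro k
        simp [Matrix.conjTranspose_apply, Complex.star_def, Complex.mul_conj]
      rw [Finset.sum_congr rfl fun k _ => this k] at hdiag
      exact_mod_cast hdiag
    have hε2 : Complex.normSq (U₀ iN i0) = 1 := by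
      rw [hpst]; rcases hε with h | h <;> simp [h, Complex.normSq]
    have hrest : ∑ k ∈ Finset.univ.erase i0, Complex.normSq (U₀ iN k) = 0 := by
      rw [Finset.sum_erase_eq_sub (Finset.mem_univ i0), hsum, hε2]
      ring
    have := Finset.sum_eq_zero_iff_of_nonneg
      (fun k _ => Complex.normSq_nonneg (U₀ iN k)) |>.mp hrest j
      (Finset.mem_erase.mpr ⟨hj, Finset.mem_univ j⟩)
    exact Complex.normSq_eq_zero.mp this
  -- pointwise: integrand = ε * real
  have hpt : ∀ t : ℝ,
      (exp ((-Complex.I * (t₀ - t)) • Hp) * dH * exp ((-Complex.I * t) • Hp)) iN i0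
      = ((ε * (((exp ((-Complex.I * t) • Hp))ᴴ * dH
          * exp ((-Complex.I * t) • Hp)) i0 i0).re : ℝ) : ℂ) := by
    intro t
    set Ut := exp ((-Complex.I * t) • Hp) with hUt
    have hB : (Utᴴ * dH * Ut).IsHermitian := Matrix.isHermitian_conjTranspose_mul_mul Ut hdH
    have hsplit : exp ((-Complex.I * (t₀ - t)) • Hp) = U₀ * Utᴴ := by
      rw [exp_smul_conjTranspose N Hp hHp t, hU₀, ← Matrix.exp_add_of_commute]
      · congr 1
        rw [← add_smul]
        congr 1
        ring
      · exact (Commute.refl Hp).smul_left _ |>.smul_right _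
    rw [hsplit, Matrix.mul_assoc, Matrix.mul_assoc, ← Matrix.mul_assoc Utᴴ,
      Matrix.mul_apply]
    have hc : ((((Utᴴ * dH * Ut) i0 i0).re : ℂ)) = (Utᴴ * dH * Ut) i0 i0 := by
      apply Complex.conj_eq_iff_re.mp
      have := congrFun (congrFun hB.eq i0) i0
      simpa [Matrix.conjTranspose_apply] using this
    rw [Finset.sum_eq_single i0]
    · rw [hpst]
      push_cast
      rw [hc]
    · intro j _ hj
      rw [hrow j hj, zero_mul]
    · simp
  -- rewrite the integral as a real number
  have hint : (∫ t in (0:ℝ)..t₀,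
      (exp ((-Complex.I * (t₀ - t)) • Hp) * dH * exp ((-Complex.I * t) • Hp)) iN i0)
      = ((∫ t in (0:ℝ)..t₀, ε * (((exp ((-Complex.I * t) • Hp))ᴴ * dH
          * exp ((-Complex.I * t) • Hp)) i0 i0).re : ℝ) : ℂ) := by
    rw [← intervalIntegral.integral_ofReal]
    exact intervalIntegral.integral_congr fun t _ => hpt t
  rw [hint]
  set r : ℝ := ∫ t in (0:ℝ)..t₀, ε * (((exp ((-Complex.I * t) • Hp))ᴴ * dH
          * exp ((-Complex.I * t) • Hp)) i0 i0).re
  simp only [_root_.map_mul, map_neg, Complex.conj_I, Complex.conj_ofReal]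
  ring
end
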